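/- Let a = diag(i a_1, …, i a_n) and b = diag(i b_1, …, i b_n) with a_1, …, a_n distinct real numbers and b_1, …, b_n real. Define the linear map T on n×n matrices with zero diagonal by (T(u))_{jk} = ((b_j − b_k)/(a_j − a_k)) u_{jk} for j ≠ k and (T(u))_{jj} = 0. Let g : ℝ² → U(n) be smooth such that u := g⁻¹ ∂_x g takes values in the skew-Hermitian matrices with zero diagonal and g⁻¹ ∂_t g = T(u). Then γ := g a g⁻¹ satisfies the Ferapontov flow ∂_t γ = ∂_x (g b g⁻¹); moreover, for every λ ∈ ℂ the connection 1-form λ γ dx + λ (g b g⁻¹) dt is flat. -/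

import Mathlib

open Matrix
open scoped ContDiff

attribute [local instance] Matrix.frobeniusNormedAddCommGroup Matrix.frobeniusNormedSpace
attribute [local instance] Matrix.frobeniusNormedRing Matrix.frobeniusNormedAlgebra

/-- Let `a = diag(i a₁, …, i aₙ)` and `b = diag(i b₁, …, i bₙ)` with `a₁, …, aₙ` distinct
reals, `T` the linear map `(T u)_{jk} = ((b_j − b_k)/(a_j − a_k)) u_{jk}` (`j ≠ k`),
`(T u)_{jj} = 0`.  If `g : ℝ² → U(n)` is smooth with `u := g⁻¹ ∂ₓ g` valued in the
skew-Hermitian matrices with zero diagonal, and `g⁻¹ ∂ₜ g = T(u)`, then `γ := g a g⁻¹`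
satisfies the Ferapontov flow `∂ₜ γ = ∂ₓ (g b g⁻¹)`; moreover for every `λ ∈ ℂ` the
1-form `λ γ dx + λ (g b g⁻¹) dt` is flat. -/
theorem stmt_9 (n : ℕ) (av bv : Fin n → ℝ) (hav : Function.Injective av)
    (a b : Matrix (Fin n) (Fin n) ℂ)
    (ha : a = Matrix.diagonal fun j => Complex.I * (av j : ℂ))
    (hb : b = Matrix.diagonal fun j => Complex.I * (bv j : ℂ))
    (g : ℝ → ℝ → Matrix (Fin n) (Fin n) ℂ)
    (hg : ContDiff ℝ ∞ (Function.uncurry g))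
    (hgu : ∀ x t : ℝ, g x t ∈ Matrix.unitaryGroup (Fin n) ℂ)
    (u : ℝ → ℝ → Matrix (Fin n) (Fin n) ℂ)
    (hu_def : ∀ x t : ℝ, u x t = star (g x t) * deriv (fun s => g s t) x)
    (hu_skew : ∀ x t : ℝ, star (u x t) = -(u x t))
    (hu_diag : ∀ x t : ℝ, ∀ j : Fin n, u x t j j = 0)
    (hgt : ∀ x t : ℝ,
      star (g x t) * deriv (fun s => g x s) t
        = Matrix.of fun j k =>
            if j = k then 0 else (((bv j - bv k) / (av j - av k) : ℝ) : ℂ) * u x t j k) :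
    (∀ x t : ℝ,
        deriv (fun s => g x s * a * star (g x s)) t
          = deriv (fun s => g s t * b * star (g s t)) x) ∧
      (∀ (lam : ℂ) (x t : ℝ),
        deriv (fun s => lam • (g x s * a * star (g x s))) t
            - deriv (fun s => lam • (g s t * b * star (g s t))) x
          = (lam • (g x t * a * star (g x t))) * (lam • (g x t * b * star (g x t)))
            - (lam • (g x t * b * star (g x t))) * (lam • (g x t * a * star (g x t)))) := by
  -- the matrix v = T(u)
  set v : ℝ → ℝ → Matrix (Fin n) (Fin n) ℂ := fun x t =>
    Matrix.of fun j k =>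
      if j = k then 0 else (((bv j - bv k) / (av j - av k) : ℝ) : ℂ) * u x t j k with hv
  -- unitarity facts
  have hsg : ∀ x t : ℝ, star (g x t) * g x t = 1 := fun x t => (Unitary.mem_iff.mp (hgu x t)).1
  have hgs : ∀ x t : ℝ, g x t * star (g x t) = 1 := fun x t => (Unitary.mem_iff.mp (hgu x t)).2
  -- v is skew-Hermitian
  have hv_skew : ∀ x t : ℝ, star (v x t) = -(v x t) := by
    intro x t
    ext j k
    have hu := congrFun (congrFun (hu_skew x t) j) k
    simp only [Matrix.star_apply, Matrix.neg_apply, Matrix.conjTranspose_apply] at hu ⊢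
    simp only [hv, Matrix.of_apply]
    by_cases h : j = k
    · simp [h]
    · have h' : ¬ (k = j) := fun hh => h hh.symm
      have hu' : (star (u x t k j) : ℂ) = -(u x t j k) := by
        have := congrFun (congrFun (hu_skew x t) j) k
        simpa [Matrix.conjTranspose_apply, Matrix.neg_apply] using this
      have hc : (((bv k - bv j) / (av k - av j) : ℝ) : ℂ)
          = (((bv j - bv k) / (av j - av k) : ℝ) : ℂ) := by
        norm_cast
        rw [← neg_div_neg_eq]; ring_nf
      simp only [h, h', if_false]
      rw [star_mul', hu', hc, show (star ((((bv j - bv k) / (av j - av k) : ℝ) : ℂ)) : ℂ)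
            = (((bv j - bv k) / (av j - av k) : ℝ) : ℂ) from Complex.conj_ofReal _]
      ring
  -- derivatives of g
  have hdiffx : ∀ x t : ℝ, DifferentiableAt ℝ (fun s => g s t) x := by
    intro x t
    have : (fun s => g s t) = (Function.uncurry g) ∘ (fun s => (s, t)) := rfl
    rw [this]
    exact ((hg.differentiable (by simp)).comp
      (differentiable_id.prodMk (differentiable_const t))).differentiableAt
  have hdifft : ∀ x t : ℝ, DifferentiableAt ℝ (fun s => g x s) t := by
    intro x t
    have : (fun s => g x s) = (Function.uncurry g) ∘ (fun s => (x, s)) := rfl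
    rw [this]
    exact ((hg.differentiable (by simp)).comp
      ((differentiable_const x).prodMk differentiable_id)).differentiableAt
  have hdx : ∀ x t : ℝ, HasDerivAt (fun s => g s t) (g x t * u x t) x := by
    intro x t
    have h := (hdiffx x t).hasDerivAt
    have : g x t * u x t = deriv (fun s => g s t) x := by
      rw [hu_def x t, ← mul_assoc, hgs x t, one_mul]
    rwa [this]
  have hdt : ∀ x t : ℝ, HasDerivAt (fun s => g x s) (g x t * v x t) t := by
    intro x t
    have h := (hdifft x t).hasDerivAt
    have hvv : v x t = star (g x t) * deriv (fun s => g x s) t := (hgt x t).symm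
    have : g x t * v x t = deriv (fun s => g x s) t := by
      rw [hvv, ← mul_assoc, hgs x t, one_mul]
    rwa [this]
  -- derivative of γ = g a g* in t
  have hγ : ∀ x t : ℝ, HasDerivAt (fun s => g x s * a * star (g x s))
      (g x t * (v x t * a - a * v x t) * star (g x t)) t := by
    intro x t
    have h1 := ((hdt x t).mul_const a).mul ((hdt x t).star)
    have he : g x t * v x t * a * star (g x t) + g x t * a * star (g x t * v x t)
        = g x t * (v x t * a - a * v x t) * star (g x t) := by
      rw [Matrix.star_mul, hv_skew x t]
      noncomm_ring
    rwa [he] at h1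
  -- derivative of β = g b g* in x
  have hβ : ∀ x t : ℝ, HasDerivAt (fun s => g s t * b * star (g s t))
      (g x t * (u x t * b - b * u x t) * star (g x t)) x := by
    intro x t
    have h1 := ((hdx x t).mul_const b).mul ((hdx x t).star)
    have he : g x t * u x t * b * star (g x t) + g x t * b * star (g x t * u x t)
        = g x t * (u x t * b - b * u x t) * star (g x t) := by
      rw [Matrix.star_mul, hu_skew x t]
      noncomm_ring
    rwa [he] at h1
  -- the key algebraic identity
  have hkey : ∀ x t : ℝ, v x t * a - a * v x t = u x t * b - b * u x t := by
    intro x t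
    ext j k
    simp only [Matrix.sub_apply, ha, hb, Matrix.mul_diagonal, Matrix.diagonal_mul, hv,
      Matrix.of_apply]
    by_cases h : j = k
    · subst h; simp [hu_diag x t j]
    · have hne : (av j : ℂ) ≠ (av k : ℂ) := by
        exact_mod_cast fun hh => h (hav hh)
      have hne' : (av j : ℂ) - (av k : ℂ) ≠ 0 := sub_ne_zero.mpr hne
      simp only [h, if_false]
      push_cast
      field_simp
      ring
  refine ⟨fun x t => ?_, fun lam x t => ?_⟩
  · exact (hγ x t).deriv.trans (by rw [hkey x t]; exact (hβ x t).deriv.symm)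
  · have h1 : deriv (fun s => lam • (g x s * a * star (g x s))) t
        = lam • (g x t * (v x t * a - a * v x t) * star (g x t)) :=
      ((hγ x t).const_smul lam).deriv
    have h2 : deriv (fun s => lam • (g s t * b * star (g s t))) x
        = lam • (g x t * (u x t * b - b * u x t) * star (g x t)) :=
      ((hβ x t).const_smul lam).deriv
    rw [h1, h2, hkey x t, sub_self]
    have hcomm : g x t * a * star (g x t) * (g x t * b * star (g x t))
        = g x t * b * star (g x t) * (g x t * a * star (g x t)) := by
      have hab : a * b = b * a := by
        rw [ha, hb, Matrix.diagonal_mul_diagonal, Matrix.diagonal_mul_diagonal]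
        exact congrArg _ (funext fun i => by ring)
      calc g x t * a * star (g x t) * (g x t * b * star (g x t))
          = g x t * (a * (star (g x t) * g x t) * b) * star (g x t) := by noncomm_ring
        _ = g x t * (a * b) * star (g x t) := by rw [hsg x t]; noncomm_ring
        _ = g x t * (b * a) * star (g x t) := by rw [hab]
        _ = g x t * (b * (star (g x t) * g x t) * a) * star (g x t) := by
            rw [hsg x t]; noncomm_ring
        _ = g x t * b * star (g x t) * (g x t * a * star (g x t)) := by noncomm_ring
    rw [smul_mul_smul_comm, smul_mul_smul_comm, hcomm, sub_self]
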